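/- Let X be uniformly distributed on a set D ⊆ {0,1}^n with |D| ≥ 2^{n−t}, and let f : D → {0,1}. Then Σ_{i=1}^n I(X_i; f(X)) ≤ t + 1, and hence E_{i ← [n]}[I(X_i; f(X))] ≤ (t+1)/n. -/

import Mathlib

/-!
Let `F = f X`. By the chain rule, `I(X_i; F) = H(X_i) - H(X_i | F) ≤ 1 - H(X_i | F)`.
Given `F = c`, `X` is uniform on the fibre `D_c`, and Gibbs' inequality against the product
of the marginals of `X` gives `log₂ |D_c| ≤ ∑ i, H(X_i | F = c)`. Averaging over `c`,
`∑ i, H(X_i | F) ≥ H(X | F) = log₂ |D| - H(F) ≥ (n - t) - 1`.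
-/

open Finset

/-- Shannon entropy (base 2) of a finitely supported distribution given by its
probability mass function. -/
noncomputable def ent {α : Type*} [Fintype α] (p : α → ℝ) : ℝ :=
  ∑ a, -(p a * Real.logb 2 (p a))

open Real

/-- The law of `g X` for `X` uniform on `S`; it vanishes identically when `S = ∅`. -/
noncomputable def uniformLaw {α β : Type*} [DecidableEq β] (S : Finset α) (g : α → β)
    (b : β) : ℝ :=
  #{x ∈ S | g x = b} / #S

noncomputable def condEnt {α β γ : Type*} [Fintype β] [DecidableEq β] [Fintype γ]
    [DecidableEq γ] (S : Finset α) (g : α → β) (h : α → γ) : ℝ :=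
  ∑ c, uniformLaw S h c * ent (uniformLaw {x ∈ S | h x = c} g)

lemma ent_eq_sum_negMulLog {α : Type*} [Fintype α] (p : α → ℝ) :
    ent p = (∑ a, negMulLog (p a)) / log 2 := by
  simp only [ent, negMulLog, logb, sum_div]
  exact sum_congr rfl fun a _ => by ring

lemma ent_le_logb_card {α : Type*} [Fintype α] (p : α → ℝ) (h0 : ∀ a, 0 ≤ p a)
    (h1 : ∑ a, p a = 1) : ent p ≤ logb 2 (Fintype.card α) := by
  obtain ⟨a, -, -⟩ := exists_ne_zero_of_sum_ne_zero (h1 ▸ one_ne_zero : ∑ a, p a ≠ 0)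
  have hk : (0 : ℝ) < Fintype.card α := by exact_mod_cast Fintype.card_pos_iff.2 ⟨a⟩
  have jensen := concaveOn_negMulLog.le_map_sum (t := univ) (p := p)
    (w := fun _ => (Fintype.card α : ℝ)⁻¹) (fun _ _ => by positivity) (by simp [hk.ne'])
    (fun a _ => Set.mem_Ici.2 (h0 a))
  simp only [smul_eq_mul, ← mul_sum, h1, mul_one, negMulLog, log_inv] at jensen
  rw [ent_eq_sum_negMulLog, logb]
  gcongr
  field_simp at jensen
  simpa only [negMulLog, neg_mul] using jensen

section UniformLaw

variable {α β : Type*} [DecidableEq β] (S : Finset α) (g : α → β)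

lemma uniformLaw_nonneg (b : β) : 0 ≤ uniformLaw S g b := by
  unfold uniformLaw
  positivity

lemma uniformLaw_pos {x : α} (hx : x ∈ S) : 0 < uniformLaw S g (g x) := by
  unfold uniformLaw
  have : 0 < #{y ∈ S | g y = g x} := card_pos.2 ⟨x, mem_filter.2 ⟨hx, rfl⟩⟩
  have : 0 < #S := card_pos.2 ⟨x, hx⟩
  positivity

variable [Fintype β]

lemma sum_uniformLaw_mul (φ : β → ℝ) :
    ∑ b, uniformLaw S g b * φ b = (∑ x ∈ S, φ (g x)) / #S := by
  rw [← sum_fiberwise' S g φ, sum_div]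
  refine sum_congr rfl fun b _ => ?_
  rw [uniformLaw, sum_const, nsmul_eq_mul]
  ring

lemma sum_uniformLaw (hS : S.Nonempty) : ∑ b, uniformLaw S g b = 1 := by
  simpa [hS.ne_empty] using sum_uniformLaw_mul S g 1

lemma ent_uniformLaw :
    ent (uniformLaw S g) = -(∑ x ∈ S, logb 2 (uniformLaw S g (g x))) / #S := by
  rw [ent, sum_neg_distrib, sum_uniformLaw_mul, neg_div]

lemma ent_uniformLaw_of_injOn (hg : Set.InjOn g S) :
    ent (uniformLaw S g) = logb 2 #S := by
  rcases S.eq_empty_or_nonempty with rfl | hS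
  · simp [ent_uniformLaw]
  have hfiber : ∀ x ∈ S, uniformLaw S g (g x) = (#S : ℝ)⁻¹ := by
    intro x hx
    have : {y ∈ S | g y = g x} = {x} := by
      ext y
      simp only [mem_filter, mem_singleton]
      exact ⟨fun h => hg h.1 hx h.2, by rintro rfl; exact ⟨hx, rfl⟩⟩
    simp [uniformLaw, this]
  have : (#S : ℝ) ≠ 0 := by exact_mod_cast hS.card_pos.ne'
  rw [ent_uniformLaw, sum_congr rfl fun x hx => by rw [hfiber x hx], sum_const, nsmul_eq_mul,
    logb_inv]
  field_simp

end UniformLaw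

section ChainRule

variable {α β γ : Type*} [DecidableEq β] [DecidableEq γ] (S : Finset α) (g : α → β)
  (h : α → γ)

lemma uniformLaw_prod_mk (b : β) (c : γ) :
    uniformLaw S (fun x => (g x, h x)) (b, c) =
      uniformLaw S h c * uniformLaw {x ∈ S | h x = c} g b := by
  have hjoint : {x ∈ S | (g x, h x) = (b, c)} = {x ∈ {x ∈ S | h x = c} | g x = b} := by
    rw [filter_filter]
    exact filter_congr fun x _ => by rw [Prod.mk.injEq, and_comm]
  unfold uniformLaw
  rw [hjoint]
  rcases eq_or_ne (#{x ∈ S | h x = c} : ℝ) 0 with hc | hc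
  · have : (#{x ∈ {x ∈ S | h x = c} | g x = b} : ℝ) = 0 := by
      simp_all
    simp [hc, this]
  · field_simp

variable [Fintype β] [Fintype γ]

lemma condEnt_eq :
    condEnt S g h = -(∑ x ∈ S, logb 2 (uniformLaw {y ∈ S | h y = h x} g (g x))) / #S := by
  rw [← sum_fiberwise S h, ← sum_neg_distrib, sum_div, condEnt]
  refine sum_congr rfl fun c _ => ?_
  rw [sum_congr rfl fun x hx => by rw [(mem_filter.1 hx).2], ent_uniformLaw]
  rcases {x ∈ S | h x = c}.eq_empty_or_nonempty with hc | hc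
  · simp [hc]
  · have : (#{x ∈ S | h x = c} : ℝ) ≠ 0 := by exact_mod_cast hc.card_pos.ne'
    unfold uniformLaw
    field_simp

lemma ent_uniformLaw_prod_mk :
    ent (uniformLaw S fun x => (g x, h x)) = ent (uniformLaw S h) + condEnt S g h := by
  have hsplit : ∀ x ∈ S, logb 2 (uniformLaw S (fun x => (g x, h x)) (g x, h x)) =
      logb 2 (uniformLaw S h (h x)) + logb 2 (uniformLaw {y ∈ S | h y = h x} g (g x)) := by
    intro x hx
    rw [uniformLaw_prod_mk, logb_mul (uniformLaw_pos S h hx).ne'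
      (uniformLaw_pos {y ∈ S | h y = h x} g (mem_filter.2 ⟨hx, rfl⟩)).ne']
  rw [ent_uniformLaw, ent_uniformLaw S h, condEnt_eq, sum_congr rfl hsplit, sum_add_distrib]
  ring

lemma sum_uniformLaw_mul_logb_card_fiber [Fintype α] [DecidableEq α] :
    ∑ c, uniformLaw S h c * logb 2 #{x ∈ S | h x = c} = logb 2 #S - ent (uniformLaw S h) := by
  have hchain := ent_uniformLaw_prod_mk S id h
  rw [ent_uniformLaw_of_injOn _ _ fun x _ y _ hxy => congrArg Prod.fst hxy, condEnt] at hchain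
  simp only [ent_uniformLaw_of_injOn _ _ (Set.injOn_id _)] at hchain
  linarith

end ChainRule

lemma sum_logb_nonpos_of_sum_le_card {ι : Type*} (s : Finset ι) (z : ι → ℝ)
    (hz : ∀ i ∈ s, 0 < z i) (hsum : ∑ i ∈ s, z i ≤ #s) : ∑ i ∈ s, logb 2 (z i) ≤ 0 := by
  have hlog : ∑ i ∈ s, log (z i) ≤ ∑ i ∈ s, (z i - 1) :=
    sum_le_sum fun i hi => log_le_sub_one_of_pos (hz i hi)
  rw [sum_sub_distrib, sum_const, nsmul_one] at hlog
  simp only [logb, ← sum_div]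
  exact div_nonpos_of_nonpos_of_nonneg (by linarith) (log_nonneg one_le_two)

section Subadditivity

variable {ι β : Type*} [Fintype ι] [DecidableEq ι] [Fintype β] [DecidableEq β]

lemma logb_card_le_sum_ent_uniformLaw (S : Finset (ι → β)) :
    logb 2 #S ≤ ∑ i, ent (uniformLaw S (· i)) := by
  rcases S.eq_empty_or_nonempty with rfl | hS
  · simp [ent_uniformLaw]
  have hN : (0 : ℝ) < #S := by exact_mod_cast hS.card_pos
  have hpos : ∀ x ∈ S, ∀ i, 0 < uniformLaw S (· i) (x i) :=
    fun x hx i => uniformLaw_pos S (· i) hx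
  have hmass : ∑ x ∈ S, ∏ i, uniformLaw S (· i) (x i) ≤ 1 :=
    calc ∑ x ∈ S, ∏ i, uniformLaw S (· i) (x i)
        ≤ ∑ x : ι → β, ∏ i, uniformLaw S (· i) (x i) :=
          sum_le_sum_of_subset_of_nonneg (subset_univ S)
            fun x _ _ => prod_nonneg fun i _ => uniformLaw_nonneg _ _ _
      _ = ∏ i, ∑ b, uniformLaw S (· i) b := (prod_univ_sum _ _).symm
      _ = 1 := prod_eq_one fun i _ => sum_uniformLaw S _ hS
  -- Gibbs' inequality against the product of the marginals
  have gibbs := sum_logb_nonpos_of_sum_le_card S (fun x => #S * ∏ i, uniformLaw S (· i) (x i))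
    (fun x hx => mul_pos hN (prod_pos fun i _ => hpos x hx i))
    (by rw [← mul_sum]; exact mul_le_of_le_one_right hN.le hmass)
  have hent : ∀ i,
      ∑ x ∈ S, logb 2 (uniformLaw S (· i) (x i)) = -(#S * ent (uniformLaw S (· i))) := by
    intro i
    rw [ent_uniformLaw]
    field_simp
  rw [sum_congr rfl fun x hx => by rw [logb_mul hN.ne' (prod_pos fun i _ => hpos x hx i).ne',
    logb_prod _ _ fun i _ => (hpos x hx i).ne'], sum_add_distrib, sum_const, sum_comm,
    sum_congr rfl fun i _ => hent i, sum_neg_distrib, ← mul_sum, nsmul_eq_mul, ← sub_eq_add_neg,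
    ← mul_sub] at gibbs
  exact sub_nonpos.1 (nonpos_of_mul_nonpos_right gibbs hN)

lemma logb_card_sub_ent_le_sum_condEnt {γ : Type*} [Fintype γ] [DecidableEq γ]
    (S : Finset (ι → β)) (h : (ι → β) → γ) :
    logb 2 #S - ent (uniformLaw S h) ≤ ∑ i, condEnt S (· i) h := by
  simp only [← sum_uniformLaw_mul_logb_card_fiber, condEnt]
  rw [sum_comm]
  gcongr with c
  rw [← mul_sum]
  exact mul_le_mul_of_nonneg_left (logb_card_le_sum_ent_uniformLaw _) (uniformLaw_nonneg _ _ _)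

end Subadditivity

theorem stmt14_general (n t : ℕ)
    (D : Finset (Fin n → Bool)) (hD : 2 ^ (n - t) ≤ D.card)
    (f : (Fin n → Bool) → Bool)
    (I : Fin n → ℝ)
    (hI : ∀ i, I i =
      ent (fun b : Bool => ((D.filter (fun x => x i = b)).card : ℝ) / D.card)
      + ent (fun y : Bool => ((D.filter (fun x => f x = y)).card : ℝ) / D.card)
      - ent (fun w : Bool × Bool =>
          ((D.filter (fun x => x i = w.1 ∧ f x = w.2)).card : ℝ) / D.card)) :
    (∑ i : Fin n, I i ≤ (t : ℝ) + 1) ∧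
    ((1 / (n : ℝ)) * ∑ i : Fin n, I i ≤ ((t : ℝ) + 1) / n) := by
  have hD₀ : D.Nonempty := card_pos.1 (lt_of_lt_of_le (Nat.two_pow_pos _) hD)
  have hIi : ∀ i, I i = ent (uniformLaw D (· i)) - condEnt D (· i) f := by
    intro i
    have hjoint : (fun w : Bool × Bool =>
        ((D.filter (fun x => x i = w.1 ∧ f x = w.2)).card : ℝ) / D.card) =
        uniformLaw D fun x => (x i, f x) := by
      ext ⟨b, y⟩
      simp [uniformLaw, Prod.ext_iff]
    rw [hI i, hjoint, ent_uniformLaw_prod_mk]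
    unfold uniformLaw
    ring
  have hbit : ∀ i, ent (uniformLaw D (· i)) ≤ 1 := fun i => by
    simpa using ent_le_logb_card _ (uniformLaw_nonneg D (· i)) (sum_uniformLaw D _ hD₀)
  have hf : ent (uniformLaw D f) ≤ 1 := by
    simpa using ent_le_logb_card _ (uniformLaw_nonneg D f) (sum_uniformLaw D _ hD₀)
  have hcard : (n : ℝ) - t ≤ logb 2 #D :=
    calc (n : ℝ) - t ≤ (n - t : ℕ) := sub_le_iff_le_add.2 (by exact_mod_cast le_tsub_add)
      _ = logb 2 (2 ^ (n - t) : ℕ) := by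
          rw [Nat.cast_pow, Nat.cast_ofNat, logb_pow, logb_self_eq_one one_lt_two, mul_one]
      _ ≤ logb 2 #D := logb_le_logb_of_le one_lt_two (by positivity) (by exact_mod_cast hD)
  have hsum : ∑ i, I i ≤ t + 1 :=
    calc ∑ i, I i = ∑ i, ent (uniformLaw D (· i)) - ∑ i, condEnt D (· i) f := by
          rw [← sum_sub_distrib]
          exact sum_congr rfl fun i _ => hIi i
      _ ≤ n - (logb 2 #D - ent (uniformLaw D f)) := by
          gcongr
          · simpa using sum_le_sum (s := univ) fun i _ => hbit i
          · exact logb_card_sub_ent_le_sum_condEnt D f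
      _ ≤ t + 1 := by linarith
  refine ⟨hsum, ?_⟩
  rw [one_div_mul_eq_div]
  exact div_le_div_of_nonneg_right hsum n.cast_nonneg

/-- for `X` uniform on `D ⊆ {0,1}^n` with `|D| ≥ 2^{n−t}` and Boolean `f`,
`Σ_{i=1}^n I(X_i; f(X)) ≤ t + 1`, hence `E_i[I(X_i; f(X))] ≤ (t+1)/n`. -/
theorem stmt14 (n t : ℕ) (ht : t ≤ n) (hn : 0 < n)
    (D : Finset (Fin n → Bool)) (hD : 2 ^ (n - t) ≤ D.card)
    (f : (Fin n → Bool) → Bool)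
    (I : Fin n → ℝ)
    (hI : ∀ i, I i =
      ent (fun b : Bool => ((D.filter (fun x => x i = b)).card : ℝ) / D.card)
      + ent (fun y : Bool => ((D.filter (fun x => f x = y)).card : ℝ) / D.card)
      - ent (fun w : Bool × Bool =>
          ((D.filter (fun x => x i = w.1 ∧ f x = w.2)).card : ℝ) / D.card)) :
    (∑ i : Fin n, I i ≤ (t : ℝ) + 1) ∧
    ((1 / (n : ℝ)) * ∑ i : Fin n, I i ≤ ((t : ℝ) + 1) / n) :=
  stmt14_general n t D hD f I hI
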